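/- Let p : ℕ → [1,∞]. The space ℓ^{p(·)} = {x ∈ ℓ^∞ : Φ_p(x) < ∞}, equipped with the metric d(x,y) = Φ_p(x−y), is a complete metric space; i.e., ℓ^{p(·)} with norm Φ_p is a Banach space. -/

import Mathlib

open scoped ENNReal

/-- `t ⊞_p s`: for `p < ∞`, `(t^p + s^p)^(1/p)`; for `p = ∞`, `max t s`. -/
noncomputable def boxPlus (p : ℝ≥0∞) (t s : ℝ) : ℝ :=
  if p = ∞ then max t s else (t ^ p.toReal + s ^ p.toReal) ^ (1 / p.toReal)

/-- The recursively defined seminorms `|||x|||_(k)` (0-indexed). -/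
noncomputable def seqNorm (p : ℕ → ℝ≥0∞) (x : ℕ → ℝ) : ℕ → ℝ
  | 0 => boxPlus (p 0) |x 0| |x 1|
  | k + 1 => boxPlus (p (k + 1)) (seqNorm p x k) |x (k + 2)|

/-- `Φ_p(x) = lim_k |||x|||_(k)`, as the supremum of the nondecreasing sequence. -/
noncomputable def Phi (p : ℕ → ℝ≥0∞) (x : ℕ → ℝ) : ℝ≥0∞ :=
  ⨆ k, ENNReal.ofReal (seqNorm p x k)

/-- `x` is a bounded real sequence, i.e. `x ∈ ℓ^∞`. -/
def IsBddSeq (x : ℕ → ℝ) : Prop := ∃ M : ℝ, ∀ n, |x n| ≤ M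

/-- Membership in the variable exponent space `ℓ^{p(·)}`. -/
def MemVLp (p : ℕ → ℝ≥0∞) (x : ℕ → ℝ) : Prop := IsBddSeq x ∧ Phi p x < ⊤

/-!
The finite seminorms `|||·|||_(k)` are built from `⊞_p`, which is monotone, continuous and (for
`p ≥ 1`) subadditive, so each `|||·|||_(k)` is a seminorm that depends continuously on finitely many
coordinates and dominates them. Hence `Φ_p` is a norm that dominates every coordinate and is lower
semicontinuous under coordinatewise convergence. A `Φ_p`-Cauchy sequence is therefore
coordinatewise Cauchy; its coordinatewise limit `x` satisfies `Φ_p(u j - x) ≤ ε` for large `j` by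
lower semicontinuity, and `Φ_p(x) ≤ Φ_p(u j) + Φ_p(u j - x) < ∞`.
-/

open Filter Topology

section BoxPlus

variable {p : ℝ≥0∞} {t s : ℝ}

lemma boxPlus_comm (p : ℝ≥0∞) (t s : ℝ) : boxPlus p t s = boxPlus p s t := by
  unfold boxPlus
  rw [max_comm, add_comm]

lemma boxPlus_nonneg (ht : 0 ≤ t) (hs : 0 ≤ s) : 0 ≤ boxPlus p t s := by
  unfold boxPlus
  split_ifs
  · exact le_max_of_le_left ht
  · positivity

lemma le_boxPlus_left (hp : p ≠ 0) (ht : 0 ≤ t) (hs : 0 ≤ s) : t ≤ boxPlus p t s := by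
  unfold boxPlus
  split_ifs with htop
  · exact le_max_left _ _
  · have hq : 0 < p.toReal := ENNReal.toReal_pos hp htop
    rw [one_div, Real.le_rpow_inv_iff_of_pos ht (by positivity) hq]
    exact le_add_of_nonneg_right (by positivity)

lemma le_boxPlus_right (hp : p ≠ 0) (ht : 0 ≤ t) (hs : 0 ≤ s) : s ≤ boxPlus p t s :=
  boxPlus_comm p s t ▸ le_boxPlus_left hp hs ht

lemma boxPlus_le_boxPlus {t' s' : ℝ} (ht : 0 ≤ t) (hs : 0 ≤ s) (htt' : t ≤ t') (hss' : s ≤ s') :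
    boxPlus p t s ≤ boxPlus p t' s' := by
  unfold boxPlus
  split_ifs
  · exact max_le_max htt' hss'
  · gcongr

lemma boxPlus_add_le_add (hp : 1 ≤ p) {t' s' : ℝ} (ht : 0 ≤ t) (hs : 0 ≤ s) (ht' : 0 ≤ t')
    (hs' : 0 ≤ s') : boxPlus p (t + t') (s + s') ≤ boxPlus p t s + boxPlus p t' s' := by
  unfold boxPlus
  split_ifs with htop
  · exact max_le (add_le_add (le_max_left _ _) (le_max_left _ _))
      (add_le_add (le_max_right _ _) (le_max_right _ _))
  · have hq : 1 ≤ p.toReal := by simpa using ENNReal.toReal_mono htop hp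
    -- Minkowski's inequality in `ℝ²`
    simpa [Fin.sum_univ_two, abs_of_nonneg, ht, hs, ht', hs', add_nonneg ht ht',
      add_nonneg hs hs'] using Real.Lp_add_le Finset.univ ![t, s] ![t', s'] hq

lemma Filter.Tendsto.boxPlus {α : Type*} {l : Filter α} {f g : α → ℝ} {a b : ℝ}
    (hf : Tendsto f l (𝓝 a)) (hg : Tendsto g l (𝓝 b)) :
    Tendsto (fun i => boxPlus p (f i) (g i)) l (𝓝 (boxPlus p a b)) := by
  unfold _root_.boxPlus
  split_ifs
  · exact hf.max hg
  · -- all exponents involved are nonnegative, so `rpow` is continuous even at `0`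
    exact ((hf.rpow_const (Or.inr ENNReal.toReal_nonneg)).add
      (hg.rpow_const (Or.inr ENNReal.toReal_nonneg))).rpow_const (Or.inr (by positivity))

end BoxPlus

section SeqNorm

variable {p : ℕ → ℝ≥0∞}

lemma seqNorm_nonneg (x : ℕ → ℝ) : ∀ k, 0 ≤ seqNorm p x k
  | 0 => boxPlus_nonneg (abs_nonneg _) (abs_nonneg _)
  | k + 1 => boxPlus_nonneg (seqNorm_nonneg x k) (abs_nonneg _)

lemma seqNorm_mono {x y : ℕ → ℝ} (h : ∀ n, |x n| ≤ |y n|) : ∀ k, seqNorm p x k ≤ seqNorm p y k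
  | 0 => boxPlus_le_boxPlus (abs_nonneg _) (abs_nonneg _) (h 0) (h 1)
  | k + 1 => boxPlus_le_boxPlus (seqNorm_nonneg x k) (abs_nonneg _) (seqNorm_mono h k) (h (k + 2))

lemma abs_le_seqNorm (hp : ∀ n, p n ≠ 0) (x : ℕ → ℝ) {n : ℕ} :
    ∀ {k}, n ≤ k + 1 → |x n| ≤ seqNorm p x k
  | 0, hn => by
    interval_cases n
    · exact le_boxPlus_left (hp 0) (abs_nonneg _) (abs_nonneg _)
    · exact le_boxPlus_right (hp 0) (abs_nonneg _) (abs_nonneg _)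
  | k + 1, hn => by
    rcases hn.eq_or_lt with rfl | hlt
    · exact le_boxPlus_right (hp (k + 1)) (seqNorm_nonneg x k) (abs_nonneg _)
    · exact (abs_le_seqNorm hp x (Nat.le_of_lt_succ hlt)).trans
        (le_boxPlus_left (hp (k + 1)) (seqNorm_nonneg x k) (abs_nonneg _))

lemma seqNorm_add_le (hp : ∀ n, 1 ≤ p n) (x y : ℕ → ℝ) :
    ∀ k, seqNorm p (x + y) k ≤ seqNorm p x k + seqNorm p y k
  | 0 => (boxPlus_le_boxPlus (abs_nonneg _) (abs_nonneg _) (abs_add_le _ _) (abs_add_le _ _)).trans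
      (boxPlus_add_le_add (hp 0) (abs_nonneg _) (abs_nonneg _) (abs_nonneg _) (abs_nonneg _))
  | k + 1 => (boxPlus_le_boxPlus (seqNorm_nonneg _ k) (abs_nonneg _) (seqNorm_add_le hp x y k)
      (abs_add_le _ _)).trans (boxPlus_add_le_add (hp (k + 1)) (seqNorm_nonneg x k) (abs_nonneg _)
        (seqNorm_nonneg y k) (abs_nonneg _))

lemma tendsto_seqNorm {α : Type*} {l : Filter α} {v : α → ℕ → ℝ} {w : ℕ → ℝ}
    (h : ∀ n, Tendsto (fun i => v i n) l (𝓝 (w n))) :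
    ∀ k, Tendsto (fun i => seqNorm p (v i) k) l (𝓝 (seqNorm p w k))
  | 0 => (h 0).abs.boxPlus (h 1).abs
  | k + 1 => (tendsto_seqNorm h k).boxPlus (h (k + 2)).abs

end SeqNorm

section Phi

variable {p : ℕ → ℝ≥0∞}

lemma ofReal_seqNorm_le_Phi (x : ℕ → ℝ) (k : ℕ) : ENNReal.ofReal (seqNorm p x k) ≤ Phi p x :=
  le_iSup (fun k => ENNReal.ofReal (seqNorm p x k)) k

lemma ofReal_abs_le_Phi (hp : ∀ n, p n ≠ 0) (x : ℕ → ℝ) (n : ℕ) :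
    ENNReal.ofReal |x n| ≤ Phi p x :=
  (ENNReal.ofReal_le_ofReal (abs_le_seqNorm hp x n.le_succ)).trans (ofReal_seqNorm_le_Phi x n)

lemma Phi_mono {x y : ℕ → ℝ} (h : ∀ n, |x n| ≤ |y n|) : Phi p x ≤ Phi p y :=
  iSup_le fun k => (ENNReal.ofReal_le_ofReal (seqNorm_mono h k)).trans (ofReal_seqNorm_le_Phi y k)

lemma Phi_neg (x : ℕ → ℝ) : Phi p (-x) = Phi p x :=
  le_antisymm (Phi_mono fun n => (abs_neg (x n)).le) (Phi_mono fun n => (abs_neg (x n)).ge)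

lemma Phi_add_le (hp : ∀ n, 1 ≤ p n) (x y : ℕ → ℝ) : Phi p (x + y) ≤ Phi p x + Phi p y :=
  iSup_le fun k => calc
    ENNReal.ofReal (seqNorm p (x + y) k)
      ≤ ENNReal.ofReal (seqNorm p x k) + ENNReal.ofReal (seqNorm p y k) :=
        (ENNReal.ofReal_le_ofReal (seqNorm_add_le hp x y k)).trans ENNReal.ofReal_add_le
    _ ≤ Phi p x + Phi p y := add_le_add (ofReal_seqNorm_le_Phi x k) (ofReal_seqNorm_le_Phi y k)

lemma Phi_sub_le (hp : ∀ n, 1 ≤ p n) (x y : ℕ → ℝ) : Phi p (x - y) ≤ Phi p x + Phi p y := by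
  simpa only [sub_eq_add_neg, Phi_neg] using Phi_add_le hp x (-y)

lemma Phi_le_of_tendsto {α : Type*} {l : Filter α} [l.NeBot] {v : α → ℕ → ℝ} {w : ℕ → ℝ}
    {c : ℝ≥0∞} (h : ∀ n, Tendsto (fun i => v i n) l (𝓝 (w n))) (hc : ∀ᶠ i in l, Phi p (v i) ≤ c) :
    Phi p w ≤ c :=
  iSup_le fun k => le_of_tendsto (ENNReal.tendsto_ofReal (tendsto_seqNorm h k))
    (hc.mono fun i hi => (ofReal_seqNorm_le_Phi (v i) k).trans hi)

lemma memVLp_iff (hp : ∀ n, p n ≠ 0) {x : ℕ → ℝ} : MemVLp p x ↔ Phi p x < ⊤ := by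
  refine ⟨And.right, fun hx => ⟨⟨(Phi p x).toReal, fun n => ?_⟩, hx⟩⟩
  exact (ENNReal.ofReal_le_iff_le_toReal hx.ne).1 (ofReal_abs_le_Phi hp x n)

end Phi

theorem lp_var_complete (p : ℕ → ℝ≥0∞) (hp : ∀ n, 1 ≤ p n)
    (u : ℕ → ℕ → ℝ) (hu : ∀ j, MemVLp p (u j))
    (hcauchy : ∀ ε : ℝ, 0 < ε → ∃ N : ℕ, ∀ j k, N ≤ j → N ≤ k →
      Phi p (u j - u k) < ENNReal.ofReal ε) :
    ∃ x : ℕ → ℝ, MemVLp p x ∧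
      Filter.Tendsto (fun j => Phi p (u j - x)) Filter.atTop (nhds 0) := by
  have hp0 (n : ℕ) : p n ≠ 0 := (zero_lt_one.trans_le (hp n)).ne'
  have hcauchy' : ∀ ε > 0, ∃ N, ∀ j k, N ≤ j → N ≤ k → Phi p (u j - u k) < ε := fun ε hε => by
    obtain ⟨δ, -, hδ, hδε⟩ := ENNReal.lt_iff_exists_real_btwn.1 hε
    exact (hcauchy δ (ENNReal.ofReal_pos.1 hδ)).imp fun N hN j k hj hk => (hN j k hj hk).trans hδε
  have hcoord (n : ℕ) : CauchySeq fun j => u j n :=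
    EMetric.cauchySeq_iff.2 fun ε hε => (hcauchy' ε hε).imp fun N hN j hj k hk => by
      rw [edist_dist, Real.dist_eq]
      exact (ofReal_abs_le_Phi hp0 (u j - u k) n).trans_lt (hN j k hj hk)
  choose x hx using fun n => cauchySeq_tendsto_of_complete (hcoord n)
  have hlim : ∀ ε > 0, ∃ N, ∀ j ≥ N, Phi p (u j - x) ≤ ε := fun ε hε =>
    (hcauchy' ε hε).imp fun N hN j hj => Phi_le_of_tendsto (fun n => (hx n).const_sub (u j n))
      (eventually_atTop.2 ⟨N, fun k hk => (hN j k hj hk).le⟩)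
  obtain ⟨N, hN⟩ := hlim 1 one_pos
  refine ⟨x, (memVLp_iff hp0).2 ?_, ENNReal.tendsto_atTop_zero.2 hlim⟩
  calc Phi p x = Phi p (u N - (u N - x)) := by rw [sub_sub_cancel]
    _ ≤ Phi p (u N) + Phi p (u N - x) := Phi_sub_le hp _ _
    _ < ⊤ := ENNReal.add_lt_top.2 ⟨(hu N).2, (hN N le_rfl).trans_lt ENNReal.one_lt_top⟩
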